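/- Assume r ≤ d ≤ 1. Then the quadruple y_n = −b̄_n, y_{n+m} = (n+1) − 2a_n − b_n, y_1 = 0, y_{n+1} = 1 + a_{n+m} − a_n is such that (0, y) is a solution of the four-variable system (S); in particular λ = 0 is an eigenvalue of (S). -/

import Mathlib

open Finset

/-- The four-variable system (S), with variables `y1 = y_1`, `yn = y_n`,
`yn1 = y_{n+1}`, `ynm = y_{n+m}`. -/
def Ssol (n m : ℕ) (a : ℕ → ℝ) (lam y1 yn yn1 ynm : ℝ) : Prop :=
  yn = min ((1 - (a n + a (n + m))) - 2 * lam + y1 + yn1 - ynm)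
      ((∑ i ∈ Finset.Icc 1 (n - 1), a i) - ((n : ℝ) - 1) * lam + y1) ∧
  ynm = min ((1 - (a n + a (n + m))) - lam + y1 + yn1 - yn)
      ((∑ i ∈ Finset.Icc (n + 1) (n + m - 1), a i) - ((m : ℝ) - 1) * lam + yn1) ∧
  y1 = min (a n - lam + (yn + ynm) / 2)
      ((∑ i ∈ Finset.Icc 1 (n - 1), (1 - a i)) - ((n : ℝ) - 1) * lam + yn) ∧
  yn1 = min (a (n + m) - lam + (yn + ynm) / 2)
      ((∑ i ∈ Finset.Icc (n + 1) (n + m - 1), (1 - a i)) - ((m : ℝ) - 1) * lam + ynm)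

/-!
Write `b_n`, `b_m` for the partial sums of `a` over `[1, n-1]` and `[n+1, n+m-1]`, so that
`b̄_n = (n - 1) - b_n`, `b̄_m = (m - 1) - b_m` and `(n + m - 1) d = b_n + a_n + b_m + a_{n+m}`.
Substituting the quadruple, the first equation of (S) reduces to `min (b_n - (n-1)) b_n` and
the third to `min 1 0`, so both hold outright. The second holds exactly when
`n ≤ (n + m - 1) d`, i.e. `r ≤ d`, and the fourth exactly when `(n + m - 1) d ≤ n + m - 1`,
i.e. `d ≤ 1`.
-/

theorem sum_Icc_one_eq_add_add_add {M : Type*} [AddCommMonoid M] (f : ℕ → M) {n m : ℕ}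
    (hn : 1 ≤ n) (hm : 1 ≤ m) :
    ∑ i ∈ Icc 1 (n + m), f i =
      (∑ i ∈ Icc 1 (n - 1), f i) + f n + (∑ i ∈ Icc (n + 1) (n + m - 1), f i) + f (n + m) := by
  have hlast : ∀ k, 1 ≤ k → ∑ i ∈ Icc 1 k, f i = (∑ i ∈ Icc 1 (k - 1), f i) + f k := by
    intro k hk
    obtain ⟨k, rfl⟩ := Nat.exists_eq_add_of_le' hk
    rw [Nat.add_sub_cancel, Finset.sum_Icc_succ_top (by omega)]
  have hsplit : ∑ i ∈ Icc 1 (n + m - 1), f i =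
      (∑ i ∈ Icc 1 n, f i) + ∑ i ∈ Icc (n + 1) (n + m - 1), f i := by
    simpa only [← Finset.Icc_add_one_left_eq_Ioc, zero_add] using
      (Finset.sum_Ioc_consecutive f (Nat.zero_le n) (by omega : n ≤ n + m - 1)).symm
  rw [hlast (n + m) (by omega), hsplit, hlast n hn]

theorem sum_Icc_one_sub (f : ℕ → ℝ) (k l : ℕ) (hl : 1 ≤ l) :
    ∑ i ∈ Icc (k + 1) (k + l - 1), (1 - f i) =
      ((l : ℝ) - 1) - ∑ i ∈ Icc (k + 1) (k + l - 1), f i := by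
  rw [Finset.sum_sub_distrib, Finset.sum_const, Nat.card_Icc, nsmul_one,
    show k + l - 1 + 1 - (k + 1) = l - 1 by omega, Nat.cast_pred hl]

theorem Ssol_zero_of_le_sum_le (n m : ℕ) (hn : 1 ≤ n) (hm : 1 ≤ m) (a : ℕ → ℝ)
    (hlow : (n : ℝ) ≤ ∑ i ∈ Icc 1 (n + m), a i)
    (hupp : ∑ i ∈ Icc 1 (n + m), a i ≤ (n : ℝ) + (m : ℝ) - 1) :
    Ssol n m a 0 0
      (-(∑ i ∈ Icc 1 (n - 1), (1 - a i)))
      (1 + a (n + m) - a n)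
      (((n : ℝ) + 1) - 2 * a n - (∑ i ∈ Icc 1 (n - 1), a i)) := by
  have hbar_n : ∑ i ∈ Icc 1 (n - 1), (1 - a i) = ((n : ℝ) - 1) - ∑ i ∈ Icc 1 (n - 1), a i := by
    simpa using sum_Icc_one_sub a 0 n hn
  have hn' : (1 : ℝ) ≤ n := by exact_mod_cast hn
  rw [sum_Icc_one_eq_add_add_add a hn hm] at hlow hupp
  unfold Ssol
  rw [hbar_n, sum_Icc_one_sub a n m hm]
  refine ⟨?_, ?_, ?_, ?_⟩
  · rw [min_eq_left] <;> linarith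
  · rw [min_eq_left] <;> linarith
  · rw [min_eq_right] <;> linarith
  · rw [min_eq_left] <;> linarith

theorem stmt9 (n m : ℕ) (hn : 2 ≤ n) (hm : 2 ≤ m) (a : ℕ → ℝ)
    (d r : ℝ) (hd : d = (∑ i ∈ Finset.Icc 1 (n + m), a i) / ((n : ℝ) + (m : ℝ) - 1))
    (hr : r = (n : ℝ) / ((n : ℝ) + (m : ℝ) - 1))
    (hrd : r ≤ d) (hd1 : d ≤ 1) :
    Ssol n m a 0 0
      (-(∑ i ∈ Finset.Icc 1 (n - 1), (1 - a i)))
      (1 + a (n + m) - a n)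
      (((n : ℝ) + 1) - 2 * a n - (∑ i ∈ Finset.Icc 1 (n - 1), a i)) := by
  have hpos : (0 : ℝ) < (n : ℝ) + (m : ℝ) - 1 := by
    have : (2 : ℝ) ≤ n := by exact_mod_cast hn
    have : (0 : ℝ) ≤ m := m.cast_nonneg
    linarith
  subst hd hr
  rw [div_le_div_iff_of_pos_right hpos] at hrd
  rw [div_le_one hpos] at hd1
  exact Ssol_zero_of_le_sum_le n m (by omega) (by omega) a hrd hd1
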